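/- For any algebraic number a that is not a nonnegative integer, -1 belongs to R_+(a), and hence R_+(a) is a subring of the complex numbers. -/

import Mathlib

open Finset

/-- `binom(a,n) = a(a-1)⋯(a-n+1)/n!` for a complex number `a`. -/
noncomputable def binomC (a : ℂ) (n : ℕ) : ℂ :=
  (∏ i ∈ Finset.range n, (a - (i : ℂ))) / (n.factorial : ℂ)

/-- `R₊(a)`: the additive submonoid of `ℂ` generated by the binomial coefficients of `a`. -/
noncomputable def RplusSet (a : ℂ) : Set ℂ :=
  (AddSubmonoid.closure (Set.range (binomC a)) : AddSubmonoid ℂ)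

/-!
Let `q` be the square of the minimal polynomial of `a`: it vanishes at `a`, is monic, and is
positive at every natural number because `a ∉ ℕ`. Newton's forward-difference expansion of `q`
around `m`, multiplied by `binom(a, m)`, gives the relation
`∑ₖ Δᵏq(m) binom(m + k, k) binom(a, m + k) = 0`, whose first coefficient `q(m)` is positive and
whose coefficients are all nonnegative once `m` is large. Solving these relations from the top
down shows that every `-binom(a, m)` is a nonnegative rational combination of the `binom(a, j)`;
for `m = 0`, after clearing denominators, `-N ∈ R₊(a)` for some `N ≥ 1`, hence `-1 ∈ R₊(a)`.
Vandermonde's identity applied to `a = m + (a - m)` expands `binom(a, m) binom(a, n)` with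
nonnegative integer coefficients in the `binom(a, j)`, so `R₊(a)` is also closed under products.
-/

open Polynomial Filter

namespace Ring

variable {R : Type*} [CommRing R] [BinomialRing R]

theorem choose_mul_choose_sub (r : R) (m k : ℕ) :
    choose r m * choose (r - m) k = (m + k).choose m • choose r (m + k) := by
  rw [choose_smul_choose r (Nat.le_add_right m k), Nat.add_sub_cancel_left]

theorem choose_mul_choose (r : R) (m n : ℕ) :
    choose r m * choose r n =
      ∑ ij ∈ antidiagonal n, (m.choose ij.1 * (m + ij.2).choose m) • choose r (m + ij.2) := by
  have hr : r = (m : R) + (r - m) := by abel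
  conv_lhs => rw [hr, add_choose_eq n (Commute.all _ _), ← hr, mul_sum]
  refine sum_congr rfl fun ij _ => ?_
  rw [choose_natCast, mul_left_comm, ← nsmul_eq_mul, choose_mul_choose_sub, smul_smul]

open scoped Pointwise in
theorem mul_mem_closure_range_choose (r : R) {x y : R}
    (hx : x ∈ AddSubmonoid.closure (Set.range (choose r)))
    (hy : y ∈ AddSubmonoid.closure (Set.range (choose r))) :
    x * y ∈ AddSubmonoid.closure (Set.range (choose r)) := by
  have : AddSubmonoid.closure (Set.range (choose r)) * AddSubmonoid.closure (Set.range (choose r))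
      ≤ AddSubmonoid.closure (Set.range (choose r)) := by
    rw [AddSubmonoid.closure_mul_closure, AddSubmonoid.closure_le]
    rintro _ ⟨_, ⟨m, rfl⟩, _, ⟨n, rfl⟩, rfl⟩
    change choose r m * choose r n ∈ _
    rw [choose_mul_choose]
    exact sum_mem fun ij _ => nsmul_mem (AddSubmonoid.subset_closure (Set.mem_range_self _)) _
  exact this (AddSubmonoid.mul_mem_mul hx hy)

theorem exists_subring_eq_closure_range_choose {r : R}
    (h : -1 ∈ AddSubmonoid.closure (Set.range (choose r))) :
    ∃ S : Subring R, (S : Set R) = AddSubmonoid.closure (Set.range (choose r)) :=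
  ⟨{ AddSubmonoid.closure (Set.range (choose r)) with
    one_mem' := AddSubmonoid.subset_closure ⟨0, choose_zero_right r⟩
    mul_mem' := mul_mem_closure_range_choose r
    neg_mem' := fun hx => by simpa using mul_mem_closure_range_choose r h hx }, rfl⟩

end Ring

namespace Polynomial

theorem eval_add_natCast_eq_sum_fwdDiff_iter {R : Type*} [CommRing R] (P : R[X]) (y : R)
    (n : ℕ) :
    P.eval (y + n) = ∑ k ∈ range (P.natDegree + 1), (fwdDiff 1)^[k] P.eval y * n.choose k := by
  have h := shift_eq_sum_fwdDiff_iter 1 P.eval n y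
  rw [nsmul_one] at h
  rw [h, sum_subset (range_subset_range.2 (by omega : n + 1 ≤ n + P.natDegree + 1)), eq_comm,
    sum_subset (range_subset_range.2 (by omega : P.natDegree + 1 ≤ n + P.natDegree + 1))]
  · exact sum_congr rfl fun k _ => by rw [nsmul_eq_mul, mul_comm]
  · intro k _ hk
    rw [fwdDiff_iter_eq_zero_of_degree_lt (by simpa using hk), Pi.zero_apply, zero_mul]
  · intro k _ hk
    rw [Nat.choose_eq_zero_of_lt (by simpa using hk), zero_smul]

theorem fwdDiff_iter_eval_map {R S : Type*} [CommRing R] [CommRing S] (f : R →+* S) (P : R[X])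
    (k : ℕ) (y : R) : (fwdDiff 1)^[k] (P.map f).eval (f y) = f ((fwdDiff 1)^[k] P.eval y) := by
  rw [fwdDiff_iter_eq_sum_shift, fwdDiff_iter_eq_sum_shift, map_sum]
  refine sum_congr rfl fun j _ => ?_
  rw [map_zsmul, eval_map, ← eval₂_at_apply, map_add, map_nsmul, map_one]

variable {K : Type*} [Field K] [CharZero K]

theorem eval_add_eq_sum_fwdDiff_iter_mul_choose (P : K[X]) (y z : K) :
    P.eval (y + z) =
      ∑ k ∈ range (P.natDegree + 1), (fwdDiff 1)^[k] P.eval y * Ring.choose z k := by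
  let binomPoly (k : ℕ) : K[X] := C (k.factorial : K)⁻¹ * descPochhammer K k
  have eval_binomPoly (k : ℕ) (x : K) : (binomPoly k).eval x = Ring.choose x k := by
    rw [Ring.choose_eq_smul, ← aeval_eq_smeval, aeval_def, eval₂_eq_eval_map,
      descPochhammer_map, smul_eq_mul, eval_mul, eval_C]
  have key : P.comp (C y + X) =
      ∑ k ∈ range (P.natDegree + 1), C ((fwdDiff 1)^[k] P.eval y) * binomPoly k := by
    refine eq_of_infinite_eval_eq _ _
      ((Set.infinite_range_of_injective Nat.cast_injective).mono ?_)
    rintro _ ⟨n, rfl⟩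
    simp only [Set.mem_ofPred_eq, eval_comp, eval_add, eval_C, eval_X, eval_finsetSum, eval_mul,
      eval_binomPoly, Ring.choose_natCast]
    exact eval_add_natCast_eq_sum_fwdDiff_iter P y n
  simpa [eval_comp, eval_finsetSum, eval_binomPoly] using congr_arg (eval z) key

theorem sum_fwdDiff_iter_smul_choose_eq_zero {F : Type*} [Field F] [Algebra F K] (P : F[X])
    {a : K} (ha : aeval a P = 0) (m : ℕ) :
    ∑ k ∈ range (P.natDegree + 1),
      ((fwdDiff 1)^[k] P.eval (m : F) * (m + k).choose m) • Ring.choose a (m + k) = 0 := by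
  have newton := eval_add_eq_sum_fwdDiff_iter_mul_choose (P.map (algebraMap F K)) m (a - m)
  rw [add_sub_cancel, eval_map_algebraMap, ha, natDegree_map] at newton
  calc _ = ∑ k ∈ range (P.natDegree + 1), Ring.choose a m *
        ((fwdDiff 1)^[k] (P.map (algebraMap F K)).eval (m : K) * Ring.choose (a - m) k) := by
        refine sum_congr rfl fun k _ => ?_
        rw [← map_natCast (algebraMap F K) m, fwdDiff_iter_eval_map, map_natCast,
          Algebra.smul_def, map_mul, map_natCast, mul_left_comm, Ring.choose_mul_choose_sub,
          nsmul_eq_mul]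
        ring
    _ = 0 := by rw [← mul_sum, ← newton, mul_zero]

end Polynomial

section Archimedean

variable {K : Type*} [Field K] [LinearOrder K] [IsStrictOrderedRing K] [Archimedean K]

theorem tendsto_atTop_of_fwdDiff_ge {f : K → K} {c : K} (hc : 0 < c)
    (h : ∀ᶠ m : ℕ in atTop, c ≤ fwdDiff 1 f m) : Tendsto (fun m : ℕ => f m) atTop atTop := by
  obtain ⟨n, hn⟩ := eventually_atTop.1 h
  have lower (j : ℕ) : f n + j * c ≤ f (j + n : ℕ) := by
    induction j with
    | zero => simp
    | succ j ih =>
      have step := hn (j + n) (Nat.le_add_left n j)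
      rw [fwdDiff, show ((j + n : ℕ) : K) + 1 = (j + 1 + n : ℕ) by push_cast; ring] at step
      rw [Nat.cast_succ, add_mul, one_mul]
      linarith
  refine (tendsto_add_atTop_iff_nat n).1 (tendsto_atTop_mono lower ?_)
  exact tendsto_atTop_add_const_left _ _ (tendsto_natCast_atTop_atTop.atTop_mul_const hc)

theorem Polynomial.eventually_fwdDiff_iter_nonneg {P : K[X]} (hP : 0 < P.leadingCoeff) :
    ∀ᶠ m : ℕ in atTop, ∀ k, 0 ≤ (fwdDiff 1)^[k] P.eval (m : K) := by
  set c := P.leadingCoeff * P.natDegree.factorial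
  have hc : 0 < c := mul_pos hP (by positivity)
  have ge_c (k : ℕ) (hk : k ≤ P.natDegree) :
      ∀ᶠ m : ℕ in atTop, c ≤ (fwdDiff 1)^[k] P.eval m := by
    induction hk using Nat.decreasingInduction with
    | self => simp [c, fwdDiff_iter_degree_eq_factorial]
    | of_succ k _ ih =>
      rw [Function.iterate_succ_apply'] at ih
      exact (tendsto_atTop_of_fwdDiff_ge hc ih).eventually_ge_atTop c
  filter_upwards [(eventually_all_finset (range (P.natDegree + 1))).2
    fun k hk => ge_c k (Nat.lt_succ_iff.1 (mem_range.1 hk))] with m hm k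
  rcases le_or_gt k P.natDegree with hk | hk
  · exact hc.le.trans (hm k (mem_range.2 (Nat.lt_succ_of_le hk)))
  · rw [fwdDiff_iter_eq_zero_of_degree_lt hk, Pi.zero_apply]

end Archimedean

namespace PointedCone

variable {K E : Type*} [Field K] [LinearOrder K] [IsStrictOrderedRing K] [AddCommGroup E]
  [Module K E] {C : PointedCone K E} {x y : E}

theorem smul_mem_of_neg_mem (hx : x ∈ C) (hnx : -x ∈ C) (r : K) : r • x ∈ C := by
  rcases le_total 0 r with hr | hr
  · exact C.smul_mem hr hx
  · rw [← neg_smul_neg]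
    exact C.smul_mem (neg_nonneg.2 hr) hnx

theorem neg_mem_of_smul_add_eq_zero {c : K} (hc : 0 < c) (hy : y ∈ C) (h : c • x + y = 0) :
    -x ∈ C := by
  have hx : -x = c⁻¹ • y := by
    rw [eq_inv_smul_iff₀ hc.ne', smul_neg, neg_eq_iff_eq_neg, eq_neg_of_add_eq_zero_left h]
  rw [hx]
  exact C.smul_mem (inv_pos.2 hc).le hy

theorem neg_mem_hull_of_relations {b : ℕ → E} {D : ℕ} {w : ℕ → ℕ → K} (hw₀ : ∀ m, 0 < w m 0)
    (hrel : ∀ m, ∑ k ∈ range (D + 1), w m k • b (m + k) = 0)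
    (hw : ∀ᶠ m in atTop, ∀ k, 0 ≤ w m k) (m : ℕ) : -b m ∈ hull K (Set.range b) := by
  have mem_hull (n : ℕ) : b n ∈ hull K (Set.range b) := subset_hull (Set.mem_range_self n)
  have step (m : ℕ) (h : ∀ k < D, w m (k + 1) • b (m + (k + 1)) ∈ hull K (Set.range b)) :
      -b m ∈ hull K (Set.range b) := by
    refine neg_mem_of_smul_add_eq_zero (hw₀ m) (sum_mem fun k hk => h k (mem_range.1 hk)) ?_
    rw [← hrel m, sum_range_succ' _ D, add_zero, add_comm]
  obtain ⟨n₀, hn₀⟩ := eventually_atTop.1 hw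
  -- Downward induction from `n₀`: relation `m` involves only indices above `m`.
  suffices ∀ d m, n₀ ≤ m + d → -b m ∈ hull K (Set.range b) from this n₀ m (Nat.le_add_left ..)
  intro d
  induction d with
  | zero => exact fun m hm => step m fun k _ => smul_mem _ (hn₀ m hm _) (mem_hull _)
  | succ d ih =>
    exact fun m hm => step m fun k _ => smul_mem_of_neg_mem (mem_hull _) (ih _ (by omega)) _

theorem exists_nsmul_mem_closure_of_mem_hull {V : Type*} [AddCommGroup V] [Module ℚ V]
    {s : Set V} {x : V} (hx : x ∈ hull ℚ s) :
    ∃ n : ℕ, 0 < n ∧ n • x ∈ AddSubmonoid.closure s := by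
  induction hx using Submodule.span_induction with
  | mem x hx => exact ⟨1, one_pos, by simpa using AddSubmonoid.subset_closure hx⟩
  | zero => exact ⟨1, one_pos, by simp⟩
  | add x y _ _ hx hy =>
    obtain ⟨n, hn, hnx⟩ := hx
    obtain ⟨n', hn', hny⟩ := hy
    refine ⟨n * n', mul_pos hn hn', ?_⟩
    have h : (n * n') • (x + y) = n' • (n • x) + n • (n' • y) := by
      rw [smul_add, smul_smul, smul_smul, mul_comm n' n]
    rw [h]
    exact add_mem (nsmul_mem hnx _) (nsmul_mem hny _)
  | smul c x _ hx =>
    obtain ⟨n, hn, hnx⟩ := hx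
    refine ⟨(c : ℚ).den * n, mul_pos (c : ℚ).pos hn, ?_⟩
    have hc : ((c : ℚ).num.toNat : ℚ) = (c : ℚ).den * c := by
      rw [Rat.den_mul_eq_num, ← Int.cast_natCast, Int.toNat_of_nonneg (Rat.num_nonneg.2 c.2)]
    have h : ((c : ℚ).den * n) • (c • x) = (c : ℚ).num.toNat • (n • x) := by
      rw [Nonneg.mk_smul]
      simp only [← Nat.cast_smul_eq_nsmul ℚ, smul_smul, hc]
      push_cast
      ring_nf
    rw [h]
    exact nsmul_mem hnx _

end PointedCone

theorem neg_one_mem_closure_range_choose {K : Type*} [Field K] [CharZero K] {a : K} {q : ℚ[X]}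
    (hq_root : aeval a q = 0) (hq_lead : 0 < q.leadingCoeff)
    (hq_pos : ∀ m : ℕ, 0 < q.eval (m : ℚ)) :
    -1 ∈ AddSubmonoid.closure (Set.range (Ring.choose a)) := by
  have hcone : -Ring.choose a 0 ∈ PointedCone.hull ℚ (Set.range (Ring.choose a)) :=
    PointedCone.neg_mem_hull_of_relations
      (w := fun m k => (fwdDiff 1)^[k] q.eval (m : ℚ) * (m + k).choose m)
      (fun m => by simpa using hq_pos m) (sum_fwdDiff_iter_smul_choose_eq_zero q hq_root)
      ((eventually_fwdDiff_iter_nonneg hq_lead).mono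
        fun m hm k => mul_nonneg (hm k) (Nat.cast_nonneg _)) 0
  obtain ⟨n, hn, hmem⟩ := PointedCone.exists_nsmul_mem_closure_of_mem_hull hcone
  rw [Ring.choose_zero_right] at hmem
  obtain ⟨k, rfl⟩ := Nat.exists_eq_add_of_lt hn
  have one_mem : (1 : K) ∈ AddSubmonoid.closure (Set.range (Ring.choose a)) :=
    AddSubmonoid.subset_closure ⟨0, Ring.choose_zero_right a⟩
  convert add_mem hmem (nsmul_mem one_mem k) using 1
  simp

theorem minpoly.eval_ne_zero_of_ne_algebraMap {F L : Type*} [Field F] [Ring L] [IsDomain L]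
    [Algebra F L] {a : L} (ha : IsIntegral F a) {r : F} (hr : a ≠ algebraMap F L r) :
    (minpoly F a).eval r ≠ 0 := by
  intro h
  have hp : minpoly F a = X - C r := by
    rw [← minpoly.eq_X_sub_C' r]
    exact minpoly.eq_of_irreducible_of_monic (minpoly.irreducible ha) (by simpa using h)
      (minpoly.monic ha)
  have := minpoly.aeval F a
  rw [hp, map_sub, aeval_X, aeval_C, sub_eq_zero] at this
  exact hr this

theorem binomC_eq_choose (a : ℂ) (n : ℕ) : binomC a n = Ring.choose a n := by
  rw [binomC, Ring.choose_eq_smul, ← aeval_eq_smeval, aeval_def, eval₂_eq_eval_map,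
    descPochhammer_map, descPochhammer_eval_eq_prod_range, smul_eq_mul, div_eq_inv_mul]

theorem RplusSet_eq_closure_range_choose (a : ℂ) :
    RplusSet a = AddSubmonoid.closure (Set.range (Ring.choose a)) := by
  rw [RplusSet, funext (binomC_eq_choose a)]

/-- For any algebraic number `a` that is not a nonnegative integer, `-1 ∈ R₊(a)`, and hence
`R₊(a)` is a subring of `ℂ`. -/
theorem neg_one_mem_Rplus (a : ℂ) (halg : IsAlgebraic ℚ a) (hna : ¬ ∃ n : ℕ, a = (n : ℂ)) :
    (-1 : ℂ) ∈ RplusSet a ∧ ∃ S : Subring ℂ, (S : Set ℂ) = RplusSet a := by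
  have hint := halg.isIntegral
  have h_eval (m : ℕ) : (minpoly ℚ a).eval (m : ℚ) ≠ 0 :=
    minpoly.eval_ne_zero_of_ne_algebraMap hint fun h => hna ⟨m, by simpa using h⟩
  have h_neg_one : -1 ∈ AddSubmonoid.closure (Set.range (Ring.choose a)) :=
    neg_one_mem_closure_range_choose (q := minpoly ℚ a ^ 2) (by simp)
      (by rw [((minpoly.monic hint).pow 2).leadingCoeff]; exact one_pos)
      (fun m => by rw [eval_pow]; exact even_two.pow_pos (h_eval m))
  rw [RplusSet_eq_closure_range_choose]
  exact ⟨h_neg_one, Ring.exists_subring_eq_closure_range_choose h_neg_one⟩
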